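/- arXiv:2408.05954 — 4 statements merged into one kernel-verified Lean document; each statement's English description precedes it below -/
import Mathlib

section
/- Every counter system whose step relation 𝒯 consists exactly of the synchronization steps induced by a finite set of synchronization transitions is fully ≼₀-compatible. -/
/-!
A synchronization step is described by the multiplicities `k p p'` of the user transitions
it fires. Enlarging a configuration without changing its zero pattern only changes how many
processes sit in states that are already occupied, so the missing processes can be routed
along a transition that the step already fires with nonzero multiplicity: add them to a
nonzero entry of the corresponding row of `k` (forward) or column of `k` (backward). The
multiplicities keep their zero pattern, hence the same transitions are used and all
zero patterns of the resulting configurations are unchanged.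
-/

namespace CS01

variable {C Q A : Type*}

/-- Configurations of a counter system: a controller state and a counter vector. -/
abbrev Conf (C Q : Type*) := C × (Q → ℕ)

/-- The order `≼₀`: same controller state, pointwise smaller counters,
and the same zero pattern. -/
def Le0 (x y : Conf C Q) : Prop :=
  x.1 = y.1 ∧ (∀ q, x.2 q ≤ y.2 q) ∧ ∀ q, (x.2 q = 0 ↔ y.2 q = 0)

/-- The product order `≼₀ × ≼₀` on pairs of configurations. -/
def ProdLe0 (s t : Conf C Q × Conf C Q) : Prop :=
  Le0 s.1 t.1 ∧ Le0 s.2 t.2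

/-- The abstraction `α`, mapping a configuration to its 01-abstraction. -/
def alpha (x : Conf C Q) : Conf C Q :=
  (x.1, fun q => if x.2 q = 0 then 0 else 1)

/-- Forward `≼₀`-compatibility of a step relation. -/
def FwdCompat (T : Set (Conf C Q × Conf C Q)) : Prop :=
  ∀ x y d, (x, y) ∈ T → Le0 x d → ∃ d', (d, d') ∈ T ∧ Le0 y d'

/-- Backward `≼₀`-compatibility of a step relation. -/
def BwdCompat (T : Set (Conf C Q × Conf C Q)) : Prop :=
  ∀ x y d', (x, y) ∈ T → Le0 y d' → ∃ d, (d, d') ∈ T ∧ Le0 x d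

/-- Steps of a counter system are size-preserving. -/
def SizePreserving [Fintype Q] (T : Set (Conf C Q × Conf C Q)) : Prop :=
  ∀ t ∈ T, ∑ q, t.1.2 q = ∑ q, t.2.2 q

/-- A step of the 01-counter system `𝒞_α`. -/
def AbsStep (T : Set (Conf C Q × Conf C Q)) (x' y' : Conf C Q) : Prop :=
  ∃ t ∈ T, alpha t.1 = x' ∧ alpha t.2 = y'

/-- A finite run of the counter system, starting in an initial configuration. -/
def IsRun (T : Set (Conf C Q × Conf C Q)) (c0 : C) (Q0 : Set Q)
    {n : ℕ} (ρ : Fin (n + 1) → Conf C Q) : Prop :=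
  (ρ 0).1 = c0 ∧ (∀ q ∉ Q0, (ρ 0).2 q = 0) ∧
    ∀ i : Fin n, (ρ i.castSucc, ρ i.succ) ∈ T

/-- A finite run of the 01-counter system, starting in an initial (0/1-valued)
abstract configuration. -/
def IsAbsRun (T : Set (Conf C Q × Conf C Q)) (c0 : C) (Q0 : Set Q)
    {n : ℕ} (σ : Fin (n + 1) → Conf C Q) : Prop :=
  (σ 0).1 = c0 ∧ (∀ q, (σ 0).2 q ≤ 1) ∧ (∀ q ∉ Q0, (σ 0).2 q = 0) ∧
    ∀ i : Fin n, AbsStep T (σ i.castSucc) (σ i.succ)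

/-- Reachability in the counter system. -/
def Reach (T : Set (Conf C Q × Conf C Q)) (c0 : C) (Q0 : Set Q)
    (x : Conf C Q) : Prop :=
  ∃ (n : ℕ) (ρ : Fin (n + 1) → Conf C Q), IsRun T c0 Q0 ρ ∧ ρ (Fin.last n) = x

/-- Reachability in the 01-counter system. -/
def AbsReach (T : Set (Conf C Q × Conf C Q)) (c0 : C) (Q0 : Set Q)
    (x : Conf C Q) : Prop :=
  ∃ (n : ℕ) (σ : Fin (n + 1) → Conf C Q), IsAbsRun T c0 Q0 σ ∧ σ (Fin.last n) = x

/-- The counter vector obtained when `i` processes move from `p` to `p'`. -/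
def moveN [DecidableEq Q] (v : Q → ℕ) (p p' : Q) (i : ℕ) : Q → ℕ :=
  fun q => v q - (if q = p then i else 0) + (if q = p' then i else 0)

/-- A synchronization step on letter `a`: every process whose current state has
an outgoing `a`-transition takes some `a`-transition; processes without an
`a`-transition stay put. `k p p'` is the number of user processes taking the
transition `(p, a, p')`. -/
def SyncStepOn [Fintype Q] (ΔC : Set (C × A × C)) (ΔQ : Set (Q × A × Q)) (a : A)
    (x y : Conf C Q) : Prop :=
  ((∃ c', (x.1, a, c') ∈ ΔC) → (x.1, a, y.1) ∈ ΔC) ∧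
  (¬ (∃ c', (x.1, a, c') ∈ ΔC) → y.1 = x.1) ∧
  ∃ k : Q → Q → ℕ,
    (∀ p p', k p p' ≠ 0 → (p, a, p') ∈ ΔQ) ∧
    (∀ q, (∃ q', (q, a, q') ∈ ΔQ) → ∑ p', k q p' = x.2 q) ∧
    (∀ q, (∃ q', (q, a, q') ∈ ΔQ) → y.2 q = ∑ p, k p q) ∧
    (∀ q, ¬ (∃ q', (q, a, q') ∈ ΔQ) → y.2 q = x.2 q + ∑ p, k p q)

/-- A synchronization step: a synchronization step on some letter `a`. -/
def SyncStep [Fintype Q] (ΔC : Set (C × A × C)) (ΔQ : Set (Q × A × Q))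
    (x y : Conf C Q) : Prop :=
  ∃ a : A, SyncStepOn ΔC ΔQ a x y


def NatLe0 (a b : ℕ) : Prop :=
  a ≤ b ∧ (a = 0 ↔ b = 0)

lemma NatLe0.refl (a : ℕ) : NatLe0 a a :=
  ⟨le_rfl, Iff.rfl⟩

lemma NatLe0.add {a b c d : ℕ} (hab : NatLe0 a b) (hcd : NatLe0 c d) :
    NatLe0 (a + c) (b + d) :=
  ⟨Nat.add_le_add hab.1 hcd.1, by simp only [Nat.add_eq_zero_iff, hab.2, hcd.2]⟩

lemma NatLe0.sum {ι : Type*} [Fintype ι] {f g : ι → ℕ} (h : ∀ i, NatLe0 (f i) (g i)) :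
    NatLe0 (∑ i, f i) (∑ i, g i) :=
  ⟨Finset.sum_le_sum fun i _ => (h i).1, by
    simp only [Finset.sum_eq_zero_iff, Finset.mem_univ, true_implies, (h _).2]⟩

/-- Put all of the missing mass on one nonzero entry. -/
lemma exists_natLe0_sum_eq {ι : Type*} [Fintype ι] (f : ι → ℕ) {n : ℕ}
    (h : NatLe0 (∑ i, f i) n) : ∃ g : ι → ℕ, (∀ i, NatLe0 (f i) (g i)) ∧ ∑ i, g i = n := by
  classical
  by_cases hf : ∑ i, f i = 0
  · exact ⟨f, fun i => NatLe0.refl _, hf.trans (h.2.1 hf).symm⟩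
  obtain ⟨i₀, -, hi₀⟩ := Finset.exists_ne_zero_of_sum_ne_zero hf
  refine ⟨f + Pi.single i₀ (n - ∑ i, f i), fun i => ⟨Nat.le_add_right _ _, ?_⟩, ?_⟩
  · rcases eq_or_ne i i₀ with rfl | hi
    · simp [hi₀]
    · simp [hi]
  · simp only [Pi.add_apply, Finset.sum_add_distrib, Fintype.sum_pi_single',
      Nat.add_sub_cancel' h.1]

lemma le0_iff {x y : Conf C Q} : Le0 x y ↔ x.1 = y.1 ∧ ∀ q, NatLe0 (x.2 q) (y.2 q) := by
  simp only [Le0, NatLe0, forall_and]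

section SyncStepOn

variable [Fintype Q] {ΔC : Set (C × A × C)} {ΔQ : Set (Q × A × Q)} {a : A}

lemma SyncStepOn.exists_of_le0_source {x y d : Conf C Q} (h : SyncStepOn ΔC ΔQ a x y)
    (hxd : Le0 x d) : ∃ d', SyncStepOn ΔC ΔQ a d d' ∧ Le0 y d' := by
  classical
  obtain ⟨hC₁, hC₂, k, hkΔ, hrow, hen, hdis⟩ := h
  obtain ⟨hc, hxd⟩ := le0_iff.1 hxd
  have hrow_target :
      ∀ p, NatLe0 (∑ p', k p p') (if ∃ q', (p, a, q') ∈ ΔQ then d.2 p else 0) := by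
    intro p
    split_ifs with hp
    · exact hrow p hp ▸ hxd p
    · have hzero : ∑ p', k p p' = 0 :=
        Finset.sum_eq_zero fun p' _ => by_contra fun hk => hp ⟨p', hkΔ p p' hk⟩
      exact hzero ▸ NatLe0.refl 0
  -- Row `p` of `k` counts the processes leaving `p`; enlarge it to the new counter `d p`.
  choose k' hk' hk'_sum using fun p => exists_natLe0_sum_eq (k p) (hrow_target p)
  refine ⟨(y.1, fun q => if ∃ q', (q, a, q') ∈ ΔQ then ∑ p, k' p q else d.2 q + ∑ p, k' p q),
    ⟨fun hd => hc ▸ hC₁ (hc ▸ hd), fun hd => (hC₂ (hc ▸ hd)).trans hc, k',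
      fun p p' hne => hkΔ p p' fun h0 => hne (((hk' p p').2).1 h0),
      fun q hq => by rw [hk'_sum q, if_pos hq], fun q hq => if_pos hq, fun q hq => if_neg hq⟩,
    le0_iff.2 ⟨rfl, fun q => ?_⟩⟩
  have hcol : NatLe0 (∑ p, k p q) (∑ p, k' p q) := NatLe0.sum fun p => hk' p q
  dsimp only
  by_cases hq : ∃ q', (q, a, q') ∈ ΔQ
  · rw [hen q hq, if_pos hq]
    exact hcol
  · rw [hdis q hq, if_neg hq]
    exact (hxd q).add hcol

lemma SyncStepOn.exists_of_le0_target {x y d' : Conf C Q} (h : SyncStepOn ΔC ΔQ a x y)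
    (hyd : Le0 y d') : ∃ d, SyncStepOn ΔC ΔQ a d d' ∧ Le0 x d := by
  classical
  obtain ⟨hC₁, hC₂, k, hkΔ, hrow, hen, hdis⟩ := h
  obtain ⟨hc, hyd⟩ := le0_iff.1 hyd
  -- The counter `y q` splits into the processes staying in `q` (slot `none`) and those
  -- arriving from each `p` (slot `some p`); enlarge this split to `d' q`.
  let split (q : Q) : Option Q → ℕ := fun o =>
    o.elim (if ∃ q', (q, a, q') ∈ ΔQ then 0 else x.2 q) fun p => k p q
  have hsplit : ∀ q, NatLe0 (∑ o, split q o) (d'.2 q) := by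
    intro q
    rw [Fintype.sum_option]
    by_cases hq : ∃ q', (q, a, q') ∈ ΔQ
    · simpa [split, hq, ← hen q hq] using hyd q
    · simpa [split, hq, ← hdis q hq] using hyd q
  choose g hg hg_sum using fun q => exists_natLe0_sum_eq (split q) (hsplit q)
  let k' : Q → Q → ℕ := fun p q => g q (some p)
  have hk' : ∀ p q, NatLe0 (k p q) (k' p q) := fun p q => hg q (some p)
  have hg_sum' : ∀ q, d'.2 q = g q none + ∑ p, k' p q := fun q => by
    rw [← hg_sum q, Fintype.sum_option]
  refine ⟨(x.1, fun q => if ∃ q', (q, a, q') ∈ ΔQ then ∑ p', k' q p' else g q none),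
    ⟨fun hx => hc ▸ hC₁ hx, fun hx => (hc ▸ hC₂ hx :), k',
      fun p p' hne => hkΔ p p' fun h0 => hne (((hk' p p').2).1 h0),
      fun q hq => (if_pos hq).symm, fun q hq => ?_, fun q hq => ?_⟩,
    le0_iff.2 ⟨rfl, fun q => ?_⟩⟩
  · have hnone : g q none = 0 := ((hg q none).2).1 (by simp [split, hq])
    rw [hg_sum' q, hnone, zero_add]
  · rw [hg_sum' q]
    exact congrArg (· + _) (if_neg hq).symm
  · dsimp only
    by_cases hq : ∃ q', (q, a, q') ∈ ΔQ
    · rw [← hrow q hq, if_pos hq]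
      exact NatLe0.sum fun p' => hk' q p'
    · simpa [split, hq] using hg q none

end SyncStepOn

theorem stmt5_general [Fintype Q]
    (ΔC : Set (C × A × C)) (ΔQ : Set (Q × A × Q))
    (T : Set (Conf C Q × Conf C Q))
    (hT : ∀ x y : Conf C Q, (x, y) ∈ T ↔ SyncStep ΔC ΔQ x y) :
    FwdCompat T ∧ BwdCompat T := by
  constructor
  · intro x y d hxy hxd
    obtain ⟨a, hstep⟩ := (hT x y).1 hxy
    obtain ⟨d', hd', hyd'⟩ := hstep.exists_of_le0_source hxd
    exact ⟨d', (hT d d').2 ⟨a, hd'⟩, hyd'⟩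
  · intro x y d' hxy hyd'
    obtain ⟨a, hstep⟩ := (hT x y).1 hxy
    obtain ⟨d, hd, hxd⟩ := hstep.exists_of_le0_target hyd'
    exact ⟨d, (hT d d').2 ⟨a, hd⟩, hxd⟩

/-- Every counter system whose steps are exactly the
synchronization steps induced by a finite set of synchronization transitions
is fully `≼₀`-compatible. -/
theorem stmt5 [Fintype C] [Fintype Q] [Nonempty C] [Nonempty Q] [Fintype A]
    (ΔC : Set (C × A × C)) (ΔQ : Set (Q × A × Q))
    (T : Set (Conf C Q × Conf C Q))
    (hT : ∀ x y : Conf C Q, (x, y) ∈ T ↔ SyncStep ΔC ΔQ x y) :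
    FwdCompat T ∧ BwdCompat T :=
  stmt5_general ΔC ΔQ T hT

end CS01
end

section
/- Let 𝒞 be a fully ≼₀-compatible counter system, 𝒞_α its 01-counter system, and φ a cardinality constraint. If an abstract configuration (c,v̂) with (c,v̂) ⊨ φ_α is reachable in 𝒞_α, then there exists a configuration (c,v) with α(c,v) = (c,v̂), (c,v) ⊨ φ, and (c,v) reachable in 𝒞. -/
/-!
Fix a bound `K`. By induction along an abstract run we find, for every prefix, a reachable
concrete configuration with the same abstraction all of whose nonzero counters are at least
`K`. For a step `x → y` of `𝒞` witnessing the last abstract step, inflate `y` to some `w`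
with `y ≼₀ w`; backward compatibility gives a step `d → w` with `x ≼₀ d`. The induction
hypothesis, used with a bound dominating the counters of `d`, yields a reachable `z` with
`d ≼₀ z`, and forward compatibility then yields a step `z → w'` with `w ≼₀ w'`.
Taking `K` to be the largest constant of `φ`, such a configuration satisfies `φ` as soon as
its abstraction satisfies `φ_α`.
-/

namespace CS01

variable {C Q A : Type*}

/-- Cardinality constraints. -/
inductive CC (C Q : Type*) where
  | ctrlEq : C → CC C Q
  | ctrlNe : C → CC C Q
  | geq : Q → ℕ → CC C Q
  | eqZero : Q → CC C Q
  | and : CC C Q → CC C Q → CC C Q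
  | or : CC C Q → CC C Q → CC C Q

/-- Satisfaction of a cardinality constraint by a configuration. -/
def CC.Sat : CC C Q → Conf C Q → Prop
  | .ctrlEq c, x => x.1 = c
  | .ctrlNe c, x => x.1 ≠ c
  | .geq q a, x => a ≤ x.2 q
  | .eqZero q, x => x.2 q = 0
  | .and φ ψ, x => φ.Sat x ∧ ψ.Sat x
  | .or φ ψ, x => φ.Sat x ∨ ψ.Sat x

/-- `φ_α`: replace every atom `#q ≥ a` with `a ≥ 1` by `#q ≥ 1`. -/
def CC.abs : CC C Q → CC C Q
  | .geq q a => .geq q (min a 1)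
  | .and φ ψ => .and φ.abs ψ.abs
  | .or φ ψ => .or φ.abs ψ.abs
  | .ctrlEq c => .ctrlEq c
  | .ctrlNe c => .ctrlNe c
  | .eqZero q => .eqZero q

def NonzeroGe (K : ℕ) (x : Conf C Q) : Prop :=
  ∀ q, x.2 q ≠ 0 → K ≤ x.2 q

lemma NonzeroGe.mono {K K' : ℕ} {x : Conf C Q} (hx : NonzeroGe K x) (h : K' ≤ K) :
    NonzeroGe K' x := fun q hq => h.trans (hx q hq)

def scale (k : ℕ) (x : Conf C Q) : Conf C Q :=
  (x.1, fun q => k * x.2 q)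

def CC.maxConst : CC C Q → ℕ
  | .geq _ a => a
  | .and φ ψ => max φ.maxConst ψ.maxConst
  | .or φ ψ => max φ.maxConst ψ.maxConst
  | _ => 0

lemma alpha_eq_alpha_iff {x y : Conf C Q} :
    alpha x = alpha y ↔ x.1 = y.1 ∧ ∀ q, (x.2 q = 0 ↔ y.2 q = 0) := by
  simp only [alpha, Prod.ext_iff, funext_iff, and_congr_right_iff]
  intro _
  refine forall_congr' fun q => ?_
  by_cases hx : x.2 q = 0 <;> by_cases hy : y.2 q = 0 <;> simp [hx, hy]

lemma alpha_eq_self_of_le_one {x : Conf C Q} (hx : ∀ q, x.2 q ≤ 1) : alpha x = x := by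
  refine Prod.ext rfl (funext fun q => ?_)
  rcases Nat.le_one_iff_eq_zero_or_eq_one.mp (hx q) with h | h <;> simp [alpha, h]

lemma Le0.alpha_eq {x y : Conf C Q} (h : Le0 x y) : alpha x = alpha y :=
  alpha_eq_alpha_iff.mpr ⟨h.1, h.2.2⟩

lemma le0_of_alpha_eq_of_nonzeroGe {x y : Conf C Q} {K : ℕ} (h : alpha x = alpha y)
    (hx : ∀ q, x.2 q ≤ K) (hy : NonzeroGe K y) : Le0 x y := by
  obtain ⟨h1, hz⟩ := alpha_eq_alpha_iff.mp h
  refine ⟨h1, fun q => ?_, hz⟩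
  by_cases hq : x.2 q = 0
  · simp [hq]
  · exact (hx q).trans (hy q fun h => hq ((hz q).mpr h))

lemma le0_scale (x : Conf C Q) {k : ℕ} (hk : k ≠ 0) : Le0 x (scale k x) :=
  ⟨rfl, fun _ => Nat.le_mul_of_pos_left _ (Nat.pos_of_ne_zero hk),
    fun q => by simp [scale, hk]⟩

lemma nonzeroGe_scale (k : ℕ) (x : Conf C Q) : NonzeroGe k (scale k x) := fun _ hq =>
  Nat.le_mul_of_pos_right k (Nat.pos_of_ne_zero (right_ne_zero_of_mul hq))

section Runs

variable {T : Set (Conf C Q × Conf C Q)} {c0 : C} {Q0 : Set Q}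

lemma reach_of_init {x : Conf C Q} (hc : x.1 = c0) (hx : ∀ q ∉ Q0, x.2 q = 0) :
    Reach T c0 Q0 x :=
  ⟨0, fun _ => x, ⟨hc, hx, fun i => i.elim0⟩, rfl⟩

lemma Reach.step {x y : Conf C Q} (hx : Reach T c0 Q0 x) (hxy : (x, y) ∈ T) :
    Reach T c0 Q0 y := by
  obtain ⟨n, ρ, ⟨hc, h0, hρ⟩, hlast⟩ := hx
  refine ⟨n + 1, Fin.snoc ρ y, ⟨?_, ?_, fun i => ?_⟩, Fin.snoc_last _ _⟩
  · rw [← Fin.castSucc_zero, Fin.snoc_castSucc]; exact hc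
  · rw [← Fin.castSucc_zero, Fin.snoc_castSucc]; exact h0
  · induction i using Fin.lastCases with
    | last => rwa [Fin.succ_last, Fin.snoc_last, Fin.snoc_castSucc, hlast]
    | cast j => rw [Fin.succ_castSucc, Fin.snoc_castSucc, Fin.snoc_castSucc]; exact hρ j

lemma IsAbsRun.init {n : ℕ} {σ : Fin (n + 2) → Conf C Q} (hσ : IsAbsRun T c0 Q0 σ) :
    IsAbsRun T c0 Q0 (Fin.init σ) := by
  obtain ⟨hc, hle, hz, hstep⟩ := hσ
  exact ⟨hc, hle, hz, fun i => by
    have := hstep i.castSucc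
    rwa [Fin.succ_castSucc] at this⟩

theorem IsAbsRun.exists_reach_nonzeroGe [Fintype Q] (hf : FwdCompat T) (hb : BwdCompat T)
    {n : ℕ} {σ : Fin (n + 1) → Conf C Q} (hσ : IsAbsRun T c0 Q0 σ) (K : ℕ) :
    ∃ x, alpha x = σ (Fin.last n) ∧ NonzeroGe K x ∧ Reach T c0 Q0 x := by
  induction n generalizing K with
  | zero =>
    obtain ⟨hc, hle, hz, -⟩ := hσ
    refine ⟨scale (K + 1) (σ 0), ?_, (nonzeroGe_scale _ _).mono K.le_succ,
      reach_of_init hc fun q hq => by simp [scale, hz q hq]⟩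
    rw [← (le0_scale _ K.succ_ne_zero).alpha_eq, alpha_eq_self_of_le_one hle]; rfl
  | succ n ih =>
    obtain ⟨⟨x, y⟩, hxy, hx, hy⟩ := hσ.2.2.2 (Fin.last n)
    set w := scale (K + 1) y
    obtain ⟨d, hdw, hxd⟩ := hb x y w hxy (le0_scale y K.succ_ne_zero)
    obtain ⟨z, hz, hzK, hzr⟩ := ih hσ.init (∑ q, d.2 q)
    have hdz : Le0 d z :=
      le0_of_alpha_eq_of_nonzeroGe (hxd.alpha_eq.symm.trans (hx.trans hz.symm))
        (fun q => Finset.single_le_sum (fun _ _ => Nat.zero_le _) (Finset.mem_univ q)) hzK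
    obtain ⟨w', hzw', hww'⟩ := hf d w z hdw hdz
    refine ⟨w', ?_, fun q hq => ?_, hzr.step hzw'⟩
    · rw [← hww'.alpha_eq, ← (le0_scale y K.succ_ne_zero).alpha_eq, ← Fin.succ_last, ← hy]
    · have hwq : w.2 q ≠ 0 := fun h => hq ((hww'.2.2 q).mp h)
      exact K.le_succ.trans ((nonzeroGe_scale _ y q hwq).trans (hww'.2.1 q))

end Runs

lemma CC.sat_of_sat_abs_alpha {x : Conf C Q} :
    ∀ φ : CC C Q, NonzeroGe φ.maxConst x → φ.abs.Sat (alpha x) → φ.Sat x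
  | .ctrlEq _, _, h | .ctrlNe _, _, h => h
  | .geq q a, hx, h => by
    rcases Nat.eq_zero_or_pos a with rfl | ha
    · exact Nat.zero_le _
    · refine hx q fun h0 => ?_
      simp [CC.abs, CC.Sat, alpha, h0] at h
      omega
  | .eqZero q, _, h => by
    simpa [CC.abs, CC.Sat, alpha] using h
  | .and φ ψ, hx, h =>
    ⟨φ.sat_of_sat_abs_alpha (hx.mono (le_max_left _ _)) h.1,
      ψ.sat_of_sat_abs_alpha (hx.mono (le_max_right _ _)) h.2⟩
  | .or φ ψ, hx, h => h.imp
    (φ.sat_of_sat_abs_alpha (hx.mono (le_max_left _ _)))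
    (ψ.sat_of_sat_abs_alpha (hx.mono (le_max_right _ _)))

theorem stmt10_general [Fintype Q]
    (T : Set (Conf C Q × Conf C Q))
    (hf : FwdCompat T) (hb : BwdCompat T)
    (c0 : C) (Q0 : Set Q) (φ : CC C Q) (xh : Conf C Q)
    (hreach : AbsReach T c0 Q0 xh) (hsat : (CC.abs φ).Sat xh) :
    ∃ x : Conf C Q, alpha x = xh ∧ φ.Sat x ∧ Reach T c0 Q0 x := by
  obtain ⟨n, σ, hσ, rfl⟩ := hreach
  obtain ⟨x, hx, hxK, hreach⟩ := hσ.exists_reach_nonzeroGe hf hb φ.maxConst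
  exact ⟨x, hx, φ.sat_of_sat_abs_alpha hxK (hx ▸ hsat), hreach⟩

/-- For a fully `≼₀`-compatible counter system `𝒞` and a
cardinality constraint `φ`, if an abstract configuration satisfying `φ_α` is
reachable in `𝒞_α`, then some configuration mapping to it under `α`, which
satisfies `φ`, is reachable in `𝒞`. -/
theorem stmt10 [Fintype C] [Fintype Q] [Nonempty C] [Nonempty Q]
    (T : Set (Conf C Q × Conf C Q)) (hsize : SizePreserving T)
    (hf : FwdCompat T) (hb : BwdCompat T)
    (c0 : C) (Q0 : Set Q) (φ : CC C Q) (xh : Conf C Q)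
    (hreach : AbsReach T c0 Q0 xh) (hsat : (CC.abs φ).Sat xh) :
    ∃ x : Conf C Q, alpha x = xh ∧ φ.Sat x ∧ Reach T c0 Q0 x :=
  stmt10_general T hf hb c0 Q0 φ xh hreach hsat

end CS01
end

section
/- Let 𝒞 = (C, Q, 𝒯) be a counter system whose steps are exactly the lossy broadcast steps induced by a finite set of lossy broadcast transitions. Then every pair ((c,v),(c',v')) ∈ 𝒯 that is minimal in 𝒯 with respect to the product order ≼₀ × ≼₀ satisfies v(q) ≤ |Q| for all q ∈ Q. (A pair t ∈ 𝒯 is minimal if every t' ∈ 𝒯 with t' ≼₀ × ≼₀ t equals t.) -/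
/-!
Suppose a minimal step `(c, v) → (c', w)` had `v q > |Q|`. Write it as idle processes `u`
plus a multiset `M` of transitions, one per moving process. If some process idles in `q` and
`w q ≥ 2`, dropping that process yields a smaller step with the same zero patterns. Otherwise
more transitions leave `q` than there are available targets (when a process idles in `q`, then
`w q = 1` and no transition enters `q`, so `q` itself is not a target), hence some transition
`(q, p')` is taken twice. Then `p'` receives at least two processes, and dropping one copy of
the transition is again a smaller step with the same zero patterns: a duplicated receive
transition can be dropped, and a duplicated broadcast is taken by `j ≥ 2` processes.
-/

namespace CS01

variable {C Q A : Type*}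

/-- Labels of lossy broadcast transitions: broadcast `!a` or receive `?a`. -/
inductive LBLab (A : Type*) where
  | br : A → LBLab A
  | rcv : A → LBLab A

/-- Number of transitions in the multiset `M` with source `q`. -/
def srcCount [DecidableEq Q] (M : Multiset (Q × Q)) (q : Q) : ℕ :=
  (M.map Prod.fst).count q

/-- Number of transitions in the multiset `M` with target `q`. -/
def tgtCount [DecidableEq Q] (M : Multiset (Q × Q)) (q : Q) : ℕ :=
  (M.map Prod.snd).count q

/-- A lossy broadcast step induced by controller transitions `ΔC` and
user transitions `ΔQ`: one broadcast transition on some letter `a` is taken by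
`j ≥ 1` processes, and an arbitrary multiset of receive transitions on `a` is
taken, each by one process; the controller takes at most one of the transitions. -/
def LBStep [DecidableEq Q] (ΔC : Set (C × LBLab A × C)) (ΔQ : Set (Q × LBLab A × Q))
    (x y : Conf C Q) : Prop :=
  ∃ (a : A) (Mb Mr : Multiset (Q × Q)),
    (∀ t ∈ Mb, (t.1, LBLab.br a, t.2) ∈ ΔQ) ∧
    (∀ t ∈ Mr, (t.1, LBLab.rcv a, t.2) ∈ ΔQ) ∧
    -- the unique broadcast transition is taken either by the controller
    -- (and then no user broadcasts), or by j ≥ 1 user processes (and then the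
    -- controller either takes a receive transition or does not move)
    (((x.1, LBLab.br a, y.1) ∈ ΔC ∧ Mb = 0) ∨
      ((∃ p0 p0' j, 1 ≤ j ∧ (p0, LBLab.br a, p0') ∈ ΔQ ∧
          Mb = Multiset.replicate j (p0, p0')) ∧
        ((x.1, LBLab.rcv a, y.1) ∈ ΔC ∨ y.1 = x.1))) ∧
    (∀ q, srcCount (Mb + Mr) q ≤ x.2 q) ∧
    ∀ q, y.2 q = x.2 q - srcCount (Mb + Mr) q + tgtCount (Mb + Mr) q

section

variable [DecidableEq Q]

lemma srcCount_erase {M : Multiset (Q × Q)} {e : Q × Q} (he : e ∈ M) :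
    srcCount M = srcCount (M.erase e) + Pi.single e.1 1 := by
  conv_lhs => rw [← Multiset.cons_erase he]
  funext r
  simp [srcCount, Multiset.count_cons, Pi.single_apply]

lemma tgtCount_erase {M : Multiset (Q × Q)} {e : Q × Q} (he : e ∈ M) :
    tgtCount M = tgtCount (M.erase e) + Pi.single e.2 1 := by
  conv_lhs => rw [← Multiset.cons_erase he]
  funext r
  simp [tgtCount, Multiset.count_cons, Pi.single_apply]

lemma count_le_tgtCount (M : Multiset (Q × Q)) (e : Q × Q) : M.count e ≤ tgtCount M e.2 := by
  have h := Multiset.map_le_map (f := Prod.snd)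
    (Multiset.le_count_iff_replicate_le.1 (le_refl (M.count e)))
  rw [Multiset.map_replicate] at h
  exact Multiset.le_count_iff_replicate_le.2 h

lemma exists_two_le_count_of_card_lt {M : Multiset (Q × Q)} {q : Q}
    (h : (M.map Prod.snd).toFinset.card < srcCount M q) : ∃ p', 2 ≤ M.count (q, p') := by
  by_contra! hM
  set N := M.filter (q = ·.1)
  have hN : N.Nodup := Multiset.nodup_iff_count_le_one.2 fun e => by
    rw [Multiset.count_filter]
    split_ifs with he
    · obtain ⟨e₁, e₂⟩ := e
      cases he
      exact Nat.le_of_lt_succ (hM e₂)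
    · exact zero_le_one
  have hcard : srcCount M q = N.toFinset.card := by
    rw [Multiset.toFinset_card_of_nodup hN, srcCount, Multiset.count_map]
  refine h.not_ge (hcard ▸ Finset.card_le_card_of_injOn Prod.snd ?_ ?_)
  · intro e he
    simp only [Finset.mem_coe, Multiset.mem_toFinset, Multiset.mem_map] at he ⊢
    exact ⟨e, (Multiset.mem_filter.1 he).1, rfl⟩
  · intro e₁ h₁ e₂ h₂ h
    simp only [Finset.mem_coe, Multiset.mem_toFinset, N, Multiset.mem_filter] at h₁ h₂
    exact Prod.ext (h₁.2.symm.trans h₂.2) h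

/-- The counters `v` evolve to `w` when one process takes each transition of `M` and the
`u` remaining processes stay idle. -/
def Fires (M : Multiset (Q × Q)) (v w : Q → ℕ) : Prop :=
  ∃ u, v = u + srcCount M ∧ w = u + tgtCount M

lemma fires_iff {M : Multiset (Q × Q)} {v w : Q → ℕ} :
    Fires M v w ↔ (∀ q, srcCount M q ≤ v q) ∧ ∀ q, w q = v q - srcCount M q + tgtCount M q := by
  constructor
  · rintro ⟨u, rfl, rfl⟩
    exact ⟨fun q => Nat.le_add_left _ _, fun q => by simp⟩
  · rintro ⟨hle, hw⟩
    refine ⟨v - srcCount M, funext fun q => ?_, funext fun q => ?_⟩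
    · simp [Nat.sub_add_cancel (hle q)]
    · simp [hw q]

lemma le0_add_single {c : C} {v : Q → ℕ} {p : Q} (hp : v p ≠ 0) :
    Le0 (c, v) (c, v + Pi.single p 1) := by
  refine ⟨rfl, fun r => Nat.le_add_right _ _, fun r => ?_⟩
  by_cases hr : r = p
  · subst hr
    simp [hp]
  · simp [hr]

lemma not_minimal_of_add_single {T : Set (Conf C Q × Conf C Q)} {c c' : C}
    {v w v' w' : Q → ℕ} {p p' : Q} (h' : ((c, v'), (c', w')) ∈ T)
    (hv : v = v' + Pi.single p 1) (hw : w = w' + Pi.single p' 1)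
    (hp : v' p ≠ 0) (hp' : w' p' ≠ 0) :
    ¬ ∀ t' ∈ T, ProdLe0 t' ((c, v), (c', w)) → t' = ((c, v), (c', w)) := by
  subst hv hw
  intro hmin
  have h := congrFun (congrArg (·.1.2) (hmin _ h' ⟨le0_add_single hp, le0_add_single hp'⟩)) p
  simp at h

variable {T : Set (Conf C Q × Conf C Q)} {Moves : C → C → Multiset (Q × Q) → Prop}

lemma not_minimal_of_idle {c c' : C} {M : Multiset (Q × Q)} {u : Q → ℕ} {q : Q}
    (hT : ∀ x y : Conf C Q, (x, y) ∈ T ↔ ∃ M, Moves x.1 y.1 M ∧ Fires M x.2 y.2)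
    (hM : Moves c c' M) (hu : u q ≠ 0) (hv : 2 ≤ u q + srcCount M q)
    (hw : 2 ≤ u q + tgtCount M q) :
    ¬ ∀ t' ∈ T, ProdLe0 t' ((c, u + srcCount M), (c', u + tgtCount M)) →
      t' = ((c, u + srcCount M), (c', u + tgtCount M)) := by
  set u' := u - Pi.single q 1
  have hu' : u = u' + Pi.single q 1 := by
    funext r
    by_cases hr : r = q
    · subst hr; simp [u']; omega
    · simp [u', hr]
  rw [hu'] at hv hw ⊢
  simp only [Pi.add_apply, Pi.single_eq_same] at hv hw
  refine not_minimal_of_add_single (p := q) (p' := q) ((hT _ _).2 ⟨M, hM, u', rfl, rfl⟩)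
    (add_right_comm _ _ _) (add_right_comm _ _ _) ?_ ?_ <;>
  simp only [Pi.add_apply] <;> omega

lemma not_minimal_of_two_le_count {c c' : C} {M : Multiset (Q × Q)} {u : Q → ℕ} {q p' : Q}
    (hT : ∀ x y : Conf C Q, (x, y) ∈ T ↔ ∃ M, Moves x.1 y.1 M ∧ Fires M x.2 y.2)
    (hMoves : ∀ {c c' M e}, Moves c c' M → 2 ≤ M.count e → Moves c c' (M.erase e))
    (hM : Moves c c' M) (hcount : 2 ≤ M.count (q, p')) (hv : 2 ≤ u q + srcCount M q) :
    ¬ ∀ t' ∈ T, ProdLe0 t' ((c, u + srcCount M), (c', u + tgtCount M)) →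
      t' = ((c, u + srcCount M), (c', u + tgtCount M)) := by
  have hmem : (q, p') ∈ M := Multiset.count_pos.1 (by omega)
  have hsrc := srcCount_erase hmem
  have htgt := tgtCount_erase hmem
  have hp' : M.count (q, p') - 1 ≤ tgtCount (M.erase (q, p')) p' :=
    Multiset.count_erase_self (q, p') M ▸ count_le_tgtCount _ _
  have hq := congrFun hsrc q
  simp only [Pi.add_apply, Pi.single_eq_same] at hq
  refine not_minimal_of_add_single ((hT _ _).2 ⟨_, hMoves hM hcount, u, rfl, rfl⟩)
    (by rw [hsrc, add_assoc]) (by rw [htgt, add_assoc]) ?_ ?_ <;>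
  simp only [Pi.add_apply] <;> omega

theorem le_card_of_minimal_step [Fintype Q]
    (hT : ∀ x y : Conf C Q, (x, y) ∈ T ↔ ∃ M, Moves x.1 y.1 M ∧ Fires M x.2 y.2)
    (hMoves : ∀ {c c' M e}, Moves c c' M → 2 ≤ M.count e → Moves c c' (M.erase e))
    {t : Conf C Q × Conf C Q} (ht : t ∈ T) (hmin : ∀ t' ∈ T, ProdLe0 t' t → t' = t) (q : Q) :
    t.1.2 q ≤ Fintype.card Q := by
  obtain ⟨⟨c, v⟩, ⟨c', w⟩⟩ := t
  obtain ⟨M, hM, u, rfl, rfl⟩ := (hT _ _).1 ht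
  by_contra! hq
  simp only [Pi.add_apply] at hq
  have hcard : 0 < Fintype.card Q := Fintype.card_pos_iff.2 ⟨q⟩
  by_cases hidle : u q ≠ 0 ∧ 2 ≤ u q + tgtCount M q
  · exact not_minimal_of_idle hT hM hidle.1 (by omega) hidle.2 hmin
  have htargets : (M.map Prod.snd).toFinset.card < srcCount M q := by
    by_cases hu : u q = 0
    · exact (Finset.card_le_univ _).trans_lt (by omega)
    · have hq' : q ∉ (M.map Prod.snd).toFinset := by
        rw [Multiset.mem_toFinset, ← Multiset.count_pos, ← tgtCount]
        omega
      exact (Finset.card_lt_univ_of_notMem hq').trans_le (by omega)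
  obtain ⟨p', hp'⟩ := exists_two_le_count_of_card_lt htargets
  exact not_minimal_of_two_le_count hT hMoves hM hp' (by omega) hmin

/-- `LBStep` without its counter conditions, the user transitions taken being `M`. -/
def LBMoves (ΔC : Set (C × LBLab A × C)) (ΔQ : Set (Q × LBLab A × Q)) (c c' : C)
    (M : Multiset (Q × Q)) : Prop :=
  ∃ (a : A) (Mb Mr : Multiset (Q × Q)), M = Mb + Mr ∧
    (∀ t ∈ Mb, (t.1, LBLab.br a, t.2) ∈ ΔQ) ∧
    (∀ t ∈ Mr, (t.1, LBLab.rcv a, t.2) ∈ ΔQ) ∧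
    (((c, LBLab.br a, c') ∈ ΔC ∧ Mb = 0) ∨
      ((∃ p0 p0' j, 1 ≤ j ∧ (p0, LBLab.br a, p0') ∈ ΔQ ∧
          Mb = Multiset.replicate j (p0, p0')) ∧
        ((c, LBLab.rcv a, c') ∈ ΔC ∨ c' = c)))

variable {ΔC : Set (C × LBLab A × C)} {ΔQ : Set (Q × LBLab A × Q)}

lemma lbStep_iff {x y : Conf C Q} :
    LBStep ΔC ΔQ x y ↔ ∃ M, LBMoves ΔC ΔQ x.1 y.1 M ∧ Fires M x.2 y.2 := by
  constructor
  · rintro ⟨a, Mb, Mr, hb, hr, hc, hle, hw⟩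
    exact ⟨_, ⟨a, Mb, Mr, rfl, hb, hr, hc⟩, fires_iff.2 ⟨hle, hw⟩⟩
  · rintro ⟨_, ⟨a, Mb, Mr, rfl, hb, hr, hc⟩, hf⟩
    exact ⟨a, Mb, Mr, hb, hr, hc, fires_iff.1 hf⟩

lemma LBMoves.erase {c c' : C} {M : Multiset (Q × Q)} {e : Q × Q}
    (hM : LBMoves ΔC ΔQ c c' M) (he : 2 ≤ M.count e) : LBMoves ΔC ΔQ c c' (M.erase e) := by
  obtain ⟨a, Mb, Mr, rfl, hb, hr, hc⟩ := hM
  by_cases her : e ∈ Mr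
  · exact ⟨a, Mb, Mr.erase e, Multiset.erase_add_right_pos _ her, hb,
      fun t ht => hr t (Multiset.mem_of_mem_erase ht), hc⟩
  rw [Multiset.count_add, Multiset.count_eq_zero.2 her, add_zero] at he
  rcases hc with ⟨-, rfl⟩ | ⟨⟨p0, p0', j, -, hδ, rfl⟩, hc⟩
  · simp at he
  obtain rfl : (p0, p0') = e := by
    by_contra hpe
    simp [Multiset.count_replicate, hpe] at he
  rw [Multiset.count_replicate_self] at he
  obtain ⟨k, rfl⟩ : ∃ k, j = k + 1 + 1 := ⟨j - 2, by omega⟩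
  refine ⟨a, Multiset.replicate (k + 1) (p0, p0'), Mr, ?_, ?_, hr,
    Or.inr ⟨⟨p0, p0', k + 1, by omega, hδ, rfl⟩, hc⟩⟩
  · rw [Multiset.erase_add_left_pos _ (Multiset.mem_replicate.2 ⟨by omega, rfl⟩),
      Multiset.replicate_succ, Multiset.erase_cons_head]
  · intro t ht
    rw [Multiset.eq_of_mem_replicate ht]
    exact hδ

end

theorem stmt17_general [Fintype Q] [DecidableEq Q]
    (ΔC : Set (C × LBLab A × C)) (ΔQ : Set (Q × LBLab A × Q))
    (T : Set (Conf C Q × Conf C Q))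
    (hT : ∀ x y : Conf C Q, (x, y) ∈ T ↔ LBStep ΔC ΔQ x y)
    (t : Conf C Q × Conf C Q) (ht : t ∈ T)
    (hmin : ∀ t' ∈ T, ProdLe0 t' t → t' = t) :
    ∀ q, t.1.2 q ≤ Fintype.card Q :=
  le_card_of_minimal_step (fun x y => (hT x y).trans lbStep_iff) LBMoves.erase ht hmin

/-- In a counter system whose steps are exactly the lossy
broadcast steps, every pair of `𝒯` that is minimal with respect to `≼₀ × ≼₀`
has at most `|Q|` processes in each user state of its source configuration. -/
theorem stmt17 [Fintype C] [Fintype Q] [Nonempty C] [Nonempty Q]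
    [Fintype A] [DecidableEq Q]
    (ΔC : Set (C × LBLab A × C)) (ΔQ : Set (Q × LBLab A × Q))
    (T : Set (Conf C Q × Conf C Q))
    (hT : ∀ x y : Conf C Q, (x, y) ∈ T ↔ LBStep ΔC ΔQ x y)
    (t : Conf C Q × Conf C Q) (ht : t ∈ T)
    (hmin : ∀ t' ∈ T, ProdLe0 t' t → t' = t) :
    ∀ q, t.1.2 q ≤ Fintype.card Q :=
  stmt17_general ΔC ΔQ T hT t ht hmin

end CS01
end

section
/- Let 𝒞 = (C, Q, 𝒯) be a counter system whose steps are exactly the disjunctive-guard steps induced by a finite set of disjunctive-guard transitions. Then every pair ((c,v),(c',v')) ∈ 𝒯 that is minimal in 𝒯 with respect to the product order ≼₀ × ≼₀ satisfies v(q) ≤ 2 for all q ∈ Q. (A pair t ∈ 𝒯 is minimal if every t' ∈ 𝒯 with t' ≼₀ × ≼₀ t equals t.) -/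
/-!
Capping every source counter at `2` gives a `≼₀`-smaller source from which the same transition
still fires, with a `≼₀`-smaller target. A controller step is unaffected by the counters. A user
step moving `i` processes out of `p` is imitated by moving all (at most two) capped processes
when it empties `p`, and by moving one process otherwise; in the latter case `p` held at least
two processes, so one stays behind and the zero pattern of the target is preserved. Minimality
then forces the source to coincide with its capped version.
-/

namespace CS01

variable {C Q A : Type*}

/-- A configuration satisfies a disjunctive guard `G ⊆ C ⊕ Q`. -/
def SatG (x : Conf C Q) (G : Set (C ⊕ Q)) : Prop :=
  Sum.inl x.1 ∈ G ∨ ∃ q, Sum.inr q ∈ G ∧ 1 ≤ x.2 q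

/-- A disjunctive-guard step induced by controller transitions `ΔC` and user
transitions `ΔQ`: either the controller takes a guarded transition, or `i ≥ 1`
user processes take the same guarded transition; the guard must be satisfied
in the source and in the target configuration. -/
def DGStep [DecidableEq Q] (ΔC : Set (C × Set (C ⊕ Q) × C))
    (ΔQ : Set (Q × Set (C ⊕ Q) × Q)) (x y : Conf C Q) : Prop :=
  (∃ G, (x.1, G, y.1) ∈ ΔC ∧ y.2 = x.2 ∧ SatG x G ∧ SatG y G) ∨
  (∃ p G p' i, 1 ≤ i ∧ (p, G, p') ∈ ΔQ ∧ y.1 = x.1 ∧ i ≤ x.2 p ∧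
    y.2 = moveN x.2 p p' i ∧ SatG x G ∧ SatG y G)

theorem SatG.of_le0 {x y : Conf C Q} {G : Set (C ⊕ Q)} (hxy : Le0 x y) (hy : SatG y G) :
    SatG x G := by
  obtain ⟨hc, -, hz⟩ := hxy
  rcases hy with hG | ⟨q, hG, hq⟩
  · exact Or.inl (hc ▸ hG)
  · exact Or.inr ⟨q, hG, Nat.one_le_iff_ne_zero.2 fun h => by have := (hz q).1 h; omega⟩

def cap (k : ℕ) (v : Q → ℕ) : Q → ℕ := fun q => min (v q) k

theorem le0_cap {k : ℕ} (hk : 1 ≤ k) (c : C) (v : Q → ℕ) : Le0 (c, cap k v) (c, v) :=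
  ⟨rfl, fun q => min_le_left _ _, fun q => by simp only [cap]; omega⟩

theorem le0_moveN [DecidableEq Q] {c : C} {u v : Q → ℕ} {p p' : Q} {i j : ℕ}
    (huv : Le0 (c, u) (c, v)) (hj : 1 ≤ j) (hji : j ≤ i) (hju : j ≤ u p) (hiv : i ≤ v p)
    (hp : u p - j ≤ v p - i) (hpz : u p - j = 0 ↔ v p - i = 0) :
    Le0 (c, moveN u p p' j) (c, moveN v p p' i) := by
  refine ⟨rfl, fun q => ?_, fun q => ?_⟩ <;>
  · have hle := huv.2.1 q
    have hz := huv.2.2 q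
    simp only [moveN] at hle hz ⊢
    split_ifs <;> subst_vars <;> omega

theorem DGStep.exists_cap_source [DecidableEq Q] {ΔC : Set (C × Set (C ⊕ Q) × C)}
    {ΔQ : Set (Q × Set (C ⊕ Q) × Q)} {x y : Conf C Q} (h : DGStep ΔC ΔQ x y) :
    ∃ y', DGStep ΔC ΔQ (x.1, cap 2 x.2) y' ∧ Le0 y' y := by
  obtain ⟨c, v⟩ := x
  obtain ⟨d, w⟩ := y
  have hcap (e : C) : Le0 (e, cap 2 v) (e, v) := le0_cap (by norm_num) e v
  rcases h with ⟨G, hG, hw, hsx, hsy⟩ | ⟨p, G, p', i, hi, hΔ, hd, hiv, hw, hsx, hsy⟩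
  · dsimp only at hw
    subst w
    exact ⟨(d, cap 2 v), Or.inl ⟨G, hG, rfl, hsx.of_le0 (hcap c), hsy.of_le0 (hcap d)⟩,
      hcap d⟩
  · dsimp only at hd hw hiv
    subst d w
    set j := if i = v p then cap 2 v p else 1 with hj
    have hj1 : 1 ≤ j := by simp only [hj, cap]; split_ifs <;> omega
    have hjp : j ≤ cap 2 v p := by simp only [hj, cap]; split_ifs <;> omega
    have hmove : Le0 (c, moveN (cap 2 v) p p' j) (c, moveN v p p' i) := by
      apply le0_moveN (hcap c) hj1 _ hjp hiv <;> simp only [hj, cap] <;> split_ifs <;> omega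
    exact ⟨(c, moveN (cap 2 v) p p' j),
      Or.inr ⟨p, G, p', j, hj1, hΔ, rfl, hjp, rfl, hsx.of_le0 (hcap c), hsy.of_le0 hmove⟩, hmove⟩

theorem stmt18_general [DecidableEq Q]
    (ΔC : Set (C × Set (C ⊕ Q) × C)) (ΔQ : Set (Q × Set (C ⊕ Q) × Q))
    (T : Set (Conf C Q × Conf C Q))
    (hT : ∀ x y : Conf C Q, (x, y) ∈ T ↔ DGStep ΔC ΔQ x y)
    (t : Conf C Q × Conf C Q) (ht : t ∈ T)
    (hmin : ∀ t' ∈ T, ProdLe0 t' t → t' = t) :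
    ∀ q, t.1.2 q ≤ 2 := by
  obtain ⟨y', hstep, hy'⟩ := ((hT _ _).1 ht).exists_cap_source
  have hcapped : ((t.1.1, cap 2 t.1.2), y') = t :=
    hmin _ ((hT _ _).2 hstep) ⟨le0_cap (by norm_num) _ _, hy'⟩
  intro q
  rw [← hcapped]
  exact min_le_right _ _

/-- In a counter system whose steps are exactly the
disjunctive-guard steps, every pair of `𝒯` that is minimal with respect to
`≼₀ × ≼₀` has at most `2` processes in each user state of its source
configuration. -/
theorem stmt18 [Fintype C] [Fintype Q] [Nonempty C] [Nonempty Q] [DecidableEq Q]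
    (ΔC : Set (C × Set (C ⊕ Q) × C)) (ΔQ : Set (Q × Set (C ⊕ Q) × Q))
    (T : Set (Conf C Q × Conf C Q))
    (hT : ∀ x y : Conf C Q, (x, y) ∈ T ↔ DGStep ΔC ΔQ x y)
    (t : Conf C Q × Conf C Q) (ht : t ∈ T)
    (hmin : ∀ t' ∈ T, ProdLe0 t' t → t' = t) :
    ∀ q, t.1.2 q ≤ 2 :=
  stmt18_general ΔC ΔQ T hT t ht hmin

end CS01
end
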